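/- Let h ∈ ℝ. There exists a linear subspace W of ℂ[z] with {0} ≠ W ≠ ℂ[z] invariant under all three operators l_{−1}, l_0, l_1 if and only if h = −n/2 for some n ∈ ℤ≥0 (equivalently, 2h is a nonpositive integer); that is, the Verma module V_h over sl(2,ℂ) is nondegenerate (contains no proper submodule) if and only if h ≠ −n/2 for all n ∈ ℤ≥0. -/

import Mathlib

open Polynomial

noncomputable section

/-- Multiplication by `X` (the operator `l₋₁`). -/
def mulX : Module.End ℂ (Polynomial ℂ) := LinearMap.mulLeft ℂ (X : Polynomial ℂ)

/-- The differentiation operator `d/dz` (the operator `D`). -/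
def der : Module.End ℂ (Polynomial ℂ) := Polynomial.derivative

/-- The generators `l₋₁, l₀, l₁` of `sl(2,ℂ)` acting on the Verma module `V_h ≅ ℂ[z]`. -/
def lgen (h : ℝ) (i : ℤ) : Module.End ℂ (Polynomial ℂ) :=
  if i = -1 then mulX
  else if i = 0 then mulX * der + (h : ℂ) • 1
  else if i = 1 then mulX * der * der + ((2 * h : ℝ) : ℂ) • der
  else 0

/-- The operator `F`, `F zⁿ = zⁿ⁺¹/(n+2h)`. -/
def Fop (h : ℝ) : Module.End ℂ (Polynomial ℂ) :=
  (Polynomial.basisMonomials ℂ).constr ℂ fun n =>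
    (((n : ℂ) + 2 * (h : ℂ))⁻¹) • (X : Polynomial ℂ) ^ (n + 1)

/-- The `q_R`-conformal symmetries `L_k` (`k ∈ ℤ`) acting on `ℂ[z]`. -/
def Lop (h : ℝ) (k : ℤ) : Module.End ℂ (Polynomial ℂ) :=
  (Polynomial.basisMonomials ℂ).constr ℂ fun n =>
    if 0 ≤ k then
      ((((n : ℂ) - (k : ℂ)) + ((k : ℂ) + 1) * (h : ℂ)) * (n.descFactorial k.toNat : ℂ)) •
        (X : Polynomial ℂ) ^ (n - k.toNat)
    else
      (((n : ℂ) + (((-k).toNat : ℂ) + 1) * (h : ℂ)) /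
          ∏ j ∈ Finset.range (-k).toNat, ((n : ℂ) + 2 * (h : ℂ) + (j : ℂ))) •
        (X : Polynomial ℂ) ^ (n + (-k).toNat)

/-- The deviations `A_{n,m} = [L_n, L_m] − (n−m)·L_{n+m}`. -/
def dev (h : ℝ) (n m : ℤ) : Module.End ℂ (Polynomial ℂ) :=
  Lop h n * Lop h m - Lop h m * Lop h n - ((n - m : ℤ) : ℂ) • Lop h (n + m)

/-- The diagonal eigenvalue `a_k(j)` of the deviation `A_{k,−k}` on the monomial `z^j`. -/
def adiag (h : ℝ) (k : ℤ) (j : ℕ) : ℂ := ((dev h k (-k)) ((X : Polynomial ℂ) ^ j)).coeff j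

/-- The weight `⟨zⁿ, zⁿ⟩ = n!·(2h)(2h+1)⋯(2h+n−1)`. -/
def wgt (h : ℝ) (n : ℕ) : ℝ := (n.factorial : ℝ) * ∏ j ∈ Finset.range n, (2 * h + (j : ℝ))

/-- The inner product of the unitarizable Verma module (`h > 0`), conjugate-linear in
the first argument. -/
def ip (h : ℝ) (p q : Polynomial ℂ) : ℂ :=
  ∑ n ∈ p.support, (starRingEnd ℂ) (p.coeff n) * q.coeff n * ((wgt h n : ℝ) : ℂ)

/-- The associated norm. -/
def nrm (h : ℝ) (p : Polynomial ℂ) : ℝ := Real.sqrt (ip h p p).re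

/-- The fundamental form `α_{i,j} = ((6h²−6h+1)/6)·(j³−j)·δ_{i+j,0}`. -/
def alphaF (h : ℝ) (i j : ℤ) : ℝ :=
  if i + j = 0 then ((6 * h ^ 2 - 6 * h + 1) / 6) * ((j : ℝ) ^ 3 - (j : ℝ)) else 0

/-- The inverse fundamental form `α^{k,−k} = −1/α_{k,−k}` (for `|k| ≥ 2`). -/
def alphaInv (h : ℝ) (k : ℤ) : ℝ := -1 / alphaF h k (-k)

/-!
If `2h ∉ {0, -1, -2, …}`, then `l₁` maps a polynomial of degree `d ≥ 1` with leading
coefficient `c` to one of degree `d - 1` with leading coefficient `d (d - 1 + 2h) c`.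
Hence any nonzero invariant subspace contains the constant `1`, and then, being stable under
multiplication by `z`, all of `ℂ[z]`. If `2h = -n`, the factor `k + 2h` kills the coefficient
of `zⁿ` in `l₁ p`, so the polynomials divisible by `zⁿ⁺¹` form a proper invariant subspace.
-/

lemma lgen_neg_one_apply (h : ℝ) (p : ℂ[X]) : lgen h (-1) p = X * p := by
  simp [lgen, mulX]

lemma coeff_lgen_zero (h : ℝ) (p : ℂ[X]) (k : ℕ) :
    (lgen h 0 p).coeff k = ((k : ℂ) + h) * p.coeff k := by
  cases k with
  | zero => simp [lgen, mulX, der, Module.End.mul_apply]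
  | succ k => simp [lgen, mulX, der, Module.End.mul_apply, coeff_X_mul, coeff_derivative]; ring

lemma coeff_lgen_one (h : ℝ) (p : ℂ[X]) (k : ℕ) :
    (lgen h 1 p).coeff k = ((k : ℂ) + 1) * ((k : ℂ) + 2 * h) * p.coeff (k + 1) := by
  cases k with
  | zero => simp [lgen, mulX, der, Module.End.mul_apply, coeff_derivative]
  | succ k => simp [lgen, mulX, der, Module.End.mul_apply, coeff_X_mul, coeff_derivative]; ring

section Lowering

variable {h : ℝ} (hh : ∀ k : ℕ, (k : ℂ) + 2 * h ≠ 0)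
include hh

lemma coeff_lgen_one_ne_zero {p : ℂ[X]} {d : ℕ} (hd : p.natDegree = d + 1) :
    (lgen h 1 p).coeff d ≠ 0 := by
  have hlead : p.coeff (d + 1) ≠ 0 := by
    rw [← hd]
    exact leadingCoeff_ne_zero.mpr (by rintro rfl; simp at hd)
  rw [coeff_lgen_one]
  exact mul_ne_zero (mul_ne_zero (Nat.cast_add_one_ne_zero d) (hh d)) hlead

lemma natDegree_lgen_one {p : ℂ[X]} {d : ℕ} (hd : p.natDegree = d + 1) :
    (lgen h 1 p).natDegree = d := by
  refine natDegree_eq_of_le_of_coeff_ne_zero ?_ (coeff_lgen_one_ne_zero hh hd)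
  refine natDegree_le_iff_coeff_eq_zero.mpr fun N hN => ?_
  rw [coeff_lgen_one, coeff_eq_zero_of_natDegree_lt (by omega), mul_zero]

lemma one_mem_of_lgen_one_mem {W : Submodule ℂ ℂ[X]} (hW : ∀ p ∈ W, lgen h 1 p ∈ W)
    {p : ℂ[X]} (hp : p ∈ W) (hp0 : p ≠ 0) : (1 : ℂ[X]) ∈ W := by
  induction hd : p.natDegree generalizing p with
  | zero =>
    obtain ⟨c, rfl⟩ : ∃ c, p = C c := ⟨_, eq_C_of_natDegree_le_zero hd.le⟩
    have hc : c ≠ 0 := by rintro rfl; exact hp0 C_0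
    simpa [smul_C, hc] using W.smul_mem c⁻¹ hp
  | succ d ih =>
    refine ih (hW p hp) (fun h0 => ?_) (natDegree_lgen_one hh hd)
    exact coeff_lgen_one_ne_zero hh hd (by rw [h0, coeff_zero])

end Lowering

lemma Submodule.eq_top_of_one_mem_of_X_mul_mem {R : Type*} [CommSemiring R]
    {W : Submodule R R[X]} (h1 : (1 : R[X]) ∈ W) (hX : ∀ p ∈ W, X * p ∈ W) : W = ⊤ := by
  refine Submodule.eq_top_iff'.mpr fun p => ?_
  induction p using Polynomial.induction_on with
  | C a => simpa [← C_mul'] using W.smul_mem a h1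
  | add p q hp hq => exact W.add_mem hp hq
  | monomial n a ih =>
    rw [pow_succ', mul_left_comm]
    exact hX _ ih

lemma X_pow_dvd_lgen_zero (h : ℝ) {n : ℕ} {p : ℂ[X]} (hp : X ^ n ∣ p) :
    X ^ n ∣ lgen h 0 p := by
  rw [X_pow_dvd_iff] at hp ⊢
  intro k hk
  rw [coeff_lgen_zero, hp k hk, mul_zero]

lemma X_pow_succ_dvd_lgen_one {h : ℝ} {n : ℕ} (hn : (n : ℂ) + 2 * h = 0) {p : ℂ[X]}
    (hp : X ^ (n + 1) ∣ p) : X ^ (n + 1) ∣ lgen h 1 p := by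
  rw [X_pow_dvd_iff] at hp ⊢
  intro k hk
  rw [coeff_lgen_one]
  rcases (Nat.lt_succ_iff.mp hk).eq_or_lt with rfl | hlt
  · rw [hn, mul_zero, zero_mul]
  · rw [hp (k + 1) (by omega), mul_zero]

/-- The Verma module `V_h` has a proper nonzero subspace invariant under
`l₋₁, l₀, l₁` if and only if `h = −n/2` for some `n ∈ ℤ≥0`. -/
theorem stmt18 (h : ℝ) :
    (∃ W : Submodule ℂ (Polynomial ℂ), W ≠ ⊥ ∧ W ≠ ⊤ ∧
      (∀ p ∈ W, (lgen h (-1)) p ∈ W) ∧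
      (∀ p ∈ W, (lgen h 0) p ∈ W) ∧
      (∀ p ∈ W, (lgen h 1) p ∈ W)) ↔
    ∃ n : ℕ, h = -(n : ℝ) / 2 := by
  constructor
  · rintro ⟨W, hbot, htop, hX, -, h1⟩
    by_contra! hn
    have hh : ∀ k : ℕ, (k : ℂ) + 2 * h ≠ 0 := fun k hk =>
      hn k (by linarith [show (k : ℝ) + 2 * h = 0 by exact_mod_cast hk])
    obtain ⟨p, hp, hp0⟩ := W.ne_bot_iff.mp hbot
    refine htop (Submodule.eq_top_of_one_mem_of_X_mul_mem (one_mem_of_lgen_one_mem hh h1 hp hp0)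
      fun q hq => ?_)
    simpa only [lgen_neg_one_apply] using hX q hq
  · rintro ⟨n, rfl⟩
    let W := (Ideal.span {(X : ℂ[X]) ^ (n + 1)}).restrictScalars ℂ
    have mem_W {p : ℂ[X]} : p ∈ W ↔ X ^ (n + 1) ∣ p := Ideal.mem_span_singleton
    refine ⟨W, ?_, ?_, fun p hp => ?_, fun p hp => ?_, fun p hp => ?_⟩
    · exact (Submodule.ne_bot_iff W).mpr ⟨_, mem_W.mpr dvd_rfl, pow_ne_zero _ X_ne_zero⟩
    · intro htop
      have h1 : (1 : ℂ[X]) ∈ W := htop ▸ Submodule.mem_top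
      simpa using X_pow_dvd_iff.mp (mem_W.mp h1) 0 n.succ_pos
    · exact mem_W.mpr ((lgen_neg_one_apply _ p).symm ▸ dvd_mul_of_dvd_right (mem_W.mp hp) X)
    · exact mem_W.mpr (X_pow_dvd_lgen_zero _ (mem_W.mp hp))
    · exact mem_W.mpr (X_pow_succ_dvd_lgen_one (by push_cast; ring) (mem_W.mp hp))
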